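/- arXiv:2602.12654 — 8 statements merged into one kernel-verified Lean document; each statement's English description precedes it below -/
import Mathlib

section
/- Let G = (V,E) be a graph, s ≥ 2, and let G^[s] be the s-blowup of G. Suppose λ ≠ 0 is an eigenvalue of G^[s] with eigenvector x. Then for each vertex i of G, the components of x on the blowup class V_i are either all zero or all nonzero. -/
open Finset

/-- Eigen-equation for the s-blowup hypergraph `G^[s]` (equation (3) of the paper). -/
def IsBlowupEig {V : Type*} [Fintype V] (G : SimpleGraph V) [DecidableRel G.Adj]
    (s : ℕ) (lam : ℂ) (x : V × Fin s → ℂ) : Prop :=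
  ∀ (i : V) (a : Fin s),
    lam * x (i, a) ^ (2 * s - 1) =
      (∏ b ∈ Finset.univ.erase a, x (i, b)) *
        ∑ j ∈ G.neighborFinset i, ∏ b : Fin s, x (j, b)

/- A zero coordinate `x (i, a)` is a factor of the right-hand side of the eigen-equation at every
other `(i, c)`, so `λ x (i, c) ^ (2s - 1) = 0`. -/
theorem IsBlowupEig.eq_zero_of_eq_zero {V : Type*} [Fintype V] {G : SimpleGraph V}
    [DecidableRel G.Adj] {s : ℕ} {lam : ℂ} {x : V × Fin s → ℂ} (heig : IsBlowupEig G s lam x)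
    (hlam : lam ≠ 0) {i : V} {a : Fin s} (ha : x (i, a) = 0) (c : Fin s) : x (i, c) = 0 := by
  obtain rfl | hca := eq_or_ne c a
  · exact ha
  have hprod : ∏ b ∈ univ.erase c, x (i, b) = 0 :=
    prod_eq_zero (mem_erase.2 ⟨hca.symm, mem_univ a⟩) ha
  have hpow : x (i, c) ^ (2 * s - 1) = 0 := by
    simpa [hprod, hlam] using heig i c
  exact pow_eq_zero_iff (by have := a.pos; omega) |>.1 hpow

theorem stmt_3_general {V : Type*} [Fintype V]
    (G : SimpleGraph V) [DecidableRel G.Adj] (s : ℕ)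
    (lam : ℂ) (hlam : lam ≠ 0) (x : V × Fin s → ℂ)
    (heig : IsBlowupEig G s lam x) :
    ∀ i : V, (∀ a : Fin s, x (i, a) = 0) ∨ (∀ a : Fin s, x (i, a) ≠ 0) := by
  intro i
  by_cases hzero : ∃ a, x (i, a) = 0
  · obtain ⟨a, ha⟩ := hzero
    exact Or.inl (heig.eq_zero_of_eq_zero hlam ha)
  · exact Or.inr (not_exists.1 hzero)

theorem stmt_3 {V : Type*} [Fintype V] [DecidableEq V]
    (G : SimpleGraph V) [DecidableRel G.Adj] (s : ℕ) (hs : 2 ≤ s)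
    (lam : ℂ) (hlam : lam ≠ 0) (x : V × Fin s → ℂ) (hx : x ≠ 0)
    (heig : IsBlowupEig G s lam x) :
    ∀ i : V, (∀ a : Fin s, x (i, a) = 0) ∨ (∀ a : Fin s, x (i, a) ≠ 0) :=
  stmt_3_general G s lam hlam x heig
end

section
/- Let G = (V,E) be a graph and s ≥ 2. If λ ≠ 0 is an eigenvalue of the s-blowup G^[s] with an eigenvector x all of whose components are nonzero, then there exists a map π : V → {2s-th roots of unity} such that λ is an eigenvalue of the matrix A(G_π) with entries π(i)π(j) for {i,j} ∈ E and 0 otherwise. Specifically, with y_i = (Π_{v ∈ V_i} x_v)/π(i), one has λ y_i = Σ_{j : {i,j} ∈ E} π(i)π(j) y_j for all i. -/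
/-!
Multiplying the eigen-equation at `v ∈ V_i` by `x_v` gives `λ x_v^{2s} = P_i S_i`, where
`P_i = ∏_{v ∈ V_i} x_v` and `S_i = ∑_{j ~ i} P_j`; this does not depend on `v`. Taking the product
over the `s` vertices of `V_i` and cancelling `P_i^s` yields `S_i^s = (λ P_i)^s`, so `λ P_i = ω_i S_i`
for an `s`-th root of unity `ω_i`. A square root `π(i)` of `ω_i` is a `2s`-th root of unity, and
`λ P_i = π(i)² S_i` is exactly the eigen-equation of `G_π` at `y_i = P_i / π(i)`.
-/

open Finset

theorem exists_sq_mul_of_pow_eq_pow {K : Type*} [Field K] [IsAlgClosed K]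
    {n : ℕ} (hn : n ≠ 0) {a b : K} (h : a ^ n = b ^ n) :
    ∃ π : K, π ^ (2 * n) = 1 ∧ b = π ^ 2 * a := by
  by_cases ha : a = 0
  · refine ⟨1, one_pow _, ?_⟩
    rw [ha, zero_pow hn] at h
    simpa [ha] using (pow_eq_zero_iff hn).mp h.symm
  obtain ⟨π, hπ⟩ := IsAlgClosed.exists_pow_nat_eq (b / a) two_pos
  refine ⟨π, ?_, ?_⟩
  · rw [pow_mul, hπ, div_pow, ← h, div_self (pow_ne_zero _ ha)]
  · rw [hπ, div_mul_cancel₀ _ ha]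

namespace IsBlowupEig

variable {V : Type*} [Fintype V] {G : SimpleGraph V} [DecidableRel G.Adj] {s : ℕ} {lam : ℂ}
  {x : V × Fin s → ℂ}

theorem mul_pow_two_mul (heig : IsBlowupEig G s lam x) (i : V) (a : Fin s) :
    lam * x (i, a) ^ (2 * s) =
      (∏ b : Fin s, x (i, b)) * ∑ j ∈ G.neighborFinset i, ∏ b : Fin s, x (j, b) := by
  have hpow : 2 * s = 2 * s - 1 + 1 := by have := a.pos; omega
  rw [hpow, pow_succ, ← mul_assoc, heig i a, ← prod_erase_mul _ _ (mem_univ a)]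
  ring

theorem sum_pow_eq (heig : IsBlowupEig G s lam x) (hx : ∀ p, x p ≠ 0) (i : V) :
    (∑ j ∈ G.neighborFinset i, ∏ b : Fin s, x (j, b)) ^ s = (lam * ∏ b : Fin s, x (i, b)) ^ s := by
  set P := ∏ b : Fin s, x (i, b)
  set S := ∑ j ∈ G.neighborFinset i, ∏ b : Fin s, x (j, b)
  have hprod : lam ^ s * P ^ (2 * s) = P ^ s * S ^ s := by
    simpa [prod_mul_distrib, prod_pow, mul_pow] using
      prod_congr rfl fun a (_ : a ∈ univ) => heig.mul_pow_two_mul i a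
  have hP : P ^ s ≠ 0 := pow_ne_zero _ (prod_ne_zero_iff.mpr fun b _ => hx _)
  apply mul_left_cancel₀ hP
  rw [← hprod, mul_pow, two_mul, pow_add]
  ring

end IsBlowupEig

theorem stmt_4_general {V : Type*} [Fintype V]
    (G : SimpleGraph V) [DecidableRel G.Adj] (s : ℕ) (hs : 2 ≤ s)
    (lam : ℂ) (x : V × Fin s → ℂ)
    (hx : ∀ p, x p ≠ 0) (heig : IsBlowupEig G s lam x) :
    ∃ π : V → ℂ, (∀ i, π i ^ (2 * s) = 1) ∧
      ∀ i : V, lam * ((∏ a : Fin s, x (i, a)) / π i) =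
        ∑ j ∈ G.neighborFinset i, π i * π j * ((∏ a : Fin s, x (j, a)) / π j) := by
  choose π hroot hπ using fun i =>
    exists_sq_mul_of_pow_eq_pow (n := s) (by omega) (heig.sum_pow_eq hx i)
  have hπ0 : ∀ i, π i ≠ 0 := fun i h => by simpa [h, show 2 * s ≠ 0 by omega] using hroot i
  refine ⟨π, hroot, fun i => ?_⟩
  calc lam * ((∏ a : Fin s, x (i, a)) / π i)
      = π i * ∑ j ∈ G.neighborFinset i, ∏ a : Fin s, x (j, a) := by
        rw [← mul_div_assoc, hπ i]; field_simp [hπ0 i]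
    _ = ∑ j ∈ G.neighborFinset i, π i * π j * ((∏ a : Fin s, x (j, a)) / π j) := by
        rw [mul_sum]
        exact sum_congr rfl fun j _ => by field_simp [hπ0 j]

theorem stmt_4 {V : Type*} [Fintype V] [DecidableEq V]
    (G : SimpleGraph V) [DecidableRel G.Adj] (s : ℕ) (hs : 2 ≤ s)
    (lam : ℂ) (hlam : lam ≠ 0) (x : V × Fin s → ℂ)
    (hx : ∀ p, x p ≠ 0) (heig : IsBlowupEig G s lam x) :
    ∃ π : V → ℂ, (∀ i, π i ^ (2 * s) = 1) ∧
      ∀ i : V, lam * ((∏ a : Fin s, x (i, a)) / π i) =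
        ∑ j ∈ G.neighborFinset i, π i * π j * ((∏ a : Fin s, x (j, a)) / π j) :=
  stmt_4_general G s hs lam x hx heig
end

section
/- Let G = (V,E) be a graph, s ≥ 2, and let Ĝ be an induced subgraph of G with a 2s-weighting π. If λ ≠ 0 is an eigenvalue of the matrix A(Ĝ_π), then λ is an eigenvalue of the s-blowup hypergraph G^[s]: explicitly, given an eigenvector y of A(Ĝ_π) and choices z_i with z_i^s = y_i, the vector x defined by x_{v_i} = π(i) z_i for one distinguished vertex v_i ∈ V_i, x_v = z_i for the other vertices of V_i (i ∈ V(Ĝ)), and x_v = 0 otherwise, is a nonzero eigenvector of G^[s] for λ. -/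
/-!
On a vertex `i` of `Ĝ` the vector `x` is `z_i` on all of `V_i` except one entry, which is
`π(i) z_i`; hence the product of `x` over `V_i` is `π(i) y_i`, and the product over `V_i`
with the entry at `v` removed is `z_i^(s-1)` or `π(i) z_i^(s-1)`. Outside `Ĝ` every product
vanishes, so the hypergraph neighbour sum at `i` is `Σ_{j ~ i} π(j) y_j = π(i)⁻¹ λ y_i`, by the
eigen-equation of `A(Ĝ_π)`. Since `π(i)^(2s) = 1`, `π(i)⁻¹ = π(i)^(2s-1)`, and the
eigen-equation of `G^[s]` at each vertex of `V_i` becomes an identity between monomials in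
`π(i)` and `z_i`. Off `Ĝ` both of its sides vanish because `s ≥ 2`.
-/

open Finset Matrix

section FiberProducts

variable {ι M : Type*} [Fintype ι] [DecidableEq ι] [CommMonoid M] (a₀ : ι) (p z : M)

theorem prod_ite_eq_mul_pow_card :
    ∏ b, (if b = a₀ then p * z else z) = p * z ^ Fintype.card ι := by
  calc ∏ b, (if b = a₀ then p * z else z) = ∏ b, ((if b = a₀ then p else 1) * z) := by
        congr 1 with b
        split_ifs <;> simp
    _ = p * z ^ Fintype.card ι := by
        rw [prod_mul_distrib, prod_ite_eq', if_pos (mem_univ _), prod_const, card_univ]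

theorem prod_erase_ite_eq (a : ι) :
    ∏ b ∈ univ.erase a, (if b = a₀ then p * z else z) =
      (if a = a₀ then 1 else p) * z ^ (Fintype.card ι - 1) := by
  calc ∏ b ∈ univ.erase a, (if b = a₀ then p * z else z)
        = ∏ b ∈ univ.erase a, ((if b = a₀ then p else 1) * z) := by
        refine prod_congr rfl fun b _ => ?_
        split_ifs <;> simp
    _ = (if a = a₀ then 1 else p) * z ^ (Fintype.card ι - 1) := by
        rw [prod_mul_distrib, prod_ite_eq', prod_const, card_erase_of_mem (mem_univ a), card_univ]
        by_cases h : a = a₀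
        · simp [h]
        · simp [h, Ne.symm h]

end FiberProducts

theorem mul_ite_pow_eq_of_pow_eq_one {M : Type*} [CommMonoid M] {n : ℕ} (hn : 0 < n) {p : M}
    (hp : p ^ (2 * n) = 1) (c : Prop) [Decidable c] (z lam : M) :
    lam * (if c then p * z else z) ^ (2 * n - 1) =
      (if c then 1 else p) * z ^ (n - 1) * (p ^ (2 * n - 1) * (lam * z ^ n)) := by
  have hz : z ^ (2 * n - 1) = z ^ (n - 1) * z ^ n := by rw [← pow_add]; congr 1; omega
  have hp' : p * p ^ (2 * n - 1) = 1 := by rw [← pow_succ', Nat.sub_add_cancel (by omega), hp]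
  split_ifs
  · rw [mul_pow, hz, one_mul]; ac_rfl
  · calc lam * z ^ (2 * n - 1) = (p * p ^ (2 * n - 1)) * lam * z ^ (2 * n - 1) := by
          rw [hp', one_mul]
      _ = p * z ^ (n - 1) * (p ^ (2 * n - 1) * (lam * z ^ n)) := by rw [hz]; ac_rfl

theorem SimpleGraph.sum_neighborFinset_eq_sum_subtype {V R : Type*} [Fintype V] [AddCommMonoid R]
    (G : SimpleGraph V) [DecidableRel G.Adj] (S : Finset V) {f : V → R}
    (hf : ∀ j ∉ S, f j = 0) (i : V) :
    ∑ j ∈ G.neighborFinset i, f j = ∑ j : S, if G.Adj i j then f j else 0 := by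
  rw [sum_coe_sort S fun j => if G.Adj i j then f j else 0, ← sum_filter]
  refine (sum_subset (fun j hj => ?_) fun j _ hj => hf j fun hjS => hj ?_).symm
  · simpa using (mem_filter.mp hj).2
  · simp_all

theorem mulVec_of_ite_mul_apply {ι R : Type*} [Fintype ι] [CommSemiring R]
    (r : ι → ι → Prop) [DecidableRel r] (π y : ι → R) (i : ι) :
    ((of fun i j => if r i j then π i * π j else 0) *ᵥ y) i =
      π i * ∑ j, if r i j then π j * y j else 0 := by
  simp only [mulVec, dotProduct, of_apply, mul_sum]
  refine sum_congr rfl fun j _ => ?_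
  split_ifs <;> ring

theorem stmt_5 {V : Type*} [Fintype V] [DecidableEq V]
    (G : SimpleGraph V) [DecidableRel G.Adj] (s : ℕ) (hs : 2 ≤ s)
    (S : Finset V) (π : {i // i ∈ S} → ℂ) (hπ : ∀ i, π i ^ (2 * s) = 1)
    (lam : ℂ)
    (y : {i // i ∈ S} → ℂ) (hy : y ≠ 0)
    (heig : (Matrix.of fun i j : {i // i ∈ S} =>
        if G.Adj i j then π i * π j else 0).mulVec y = lam • y)
    (z : {i // i ∈ S} → ℂ) (hz : ∀ i, z i ^ s = y i)
    (x : V × Fin s → ℂ)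
    (hxS : ∀ (i : V) (h : i ∈ S) (a : Fin s),
      x (i, a) = if a = (⟨0, by omega⟩ : Fin s) then π ⟨i, h⟩ * z ⟨i, h⟩ else z ⟨i, h⟩)
    (hxout : ∀ i : V, i ∉ S → ∀ a : Fin s, x (i, a) = 0) :
    x ≠ 0 ∧ IsBlowupEig G s lam x := by
  set a₀ : Fin s := ⟨0, by omega⟩
  have hprod_out : ∀ j ∉ S, ∏ b, x (j, b) = 0 :=
    fun j hj => prod_eq_zero (mem_univ a₀) (hxout j hj a₀)
  have hprod : ∀ j : S, ∏ b, x (j, b) = π j * y j := fun j => by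
    simp only [hxS j j.2, prod_ite_eq_mul_pow_card, Fintype.card_fin, hz]
  have hnbr : ∀ i : S,
      ∑ j ∈ G.neighborFinset i, ∏ b, x (j, b) = π i ^ (2 * s - 1) * (lam * y i) := by
    intro i
    have he := congrFun heig i
    rw [mulVec_of_ite_mul_apply, Pi.smul_apply, smul_eq_mul] at he
    rw [G.sum_neighborFinset_eq_sum_subtype S hprod_out, ← he, ← mul_assoc, ← pow_succ,
      Nat.sub_add_cancel (by omega), hπ, one_mul]
    simp only [hprod]
  refine ⟨fun hx => ?_, fun i a => ?_⟩
  · obtain ⟨i, hi⟩ := Function.ne_iff.mp hy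
    have hπi : π i ≠ 0 := ne_zero_pow (n := 2 * s) (by omega) (by rw [hπ i]; exact one_ne_zero)
    have hzi : z i ≠ 0 := ne_zero_pow (n := s) (by omega) (by rwa [hz])
    have hxi := congrFun hx (i, a₀)
    rw [hxS i i.2, if_pos rfl] at hxi
    exact mul_ne_zero hπi hzi hxi
  by_cases h : i ∈ S
  · rw [hnbr ⟨i, h⟩]
    simp only [hxS i h]
    rw [prod_erase_ite_eq, Fintype.card_fin, ← hz]
    exact mul_ite_pow_eq_of_pow_eq_one (by omega) (hπ _) _ _ _
  · have : Nontrivial (Fin s) := Fin.nontrivial_iff_two_le.mpr hs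
    obtain ⟨b, hb⟩ := exists_ne a
    rw [hxout i h a, prod_eq_zero (mem_erase.mpr ⟨hb, mem_univ b⟩) (hxout i h b),
      zero_pow (by omega), mul_zero, zero_mul]
end

section
/- Let G be a graph and s ≥ 2. A complex number λ is an eigenvalue of the s-blowup G^[s] if and only if λ is an eigenvalue of A(Ĝ_π) for some induced subgraph Ĝ of G and some 2s-weighting π of Ĝ (mapping each vertex to a 2s-th root of unity). -/
/-!
Multiplying the eigen-equation at `(i, a)` by `x (i, a)` turns it into
`λ x(i,a)^{2s} = P_i ∑_{j ∼ i} P_j` with `P_i = ∏_b x(i,b)`. For `λ ≠ 0` the right-hand side does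
not depend on `a`, so all entries of a row have the same `2s`-th power. On the set `S` of nonzero
rows, `y_i = x(i,0)^s` is then an eigenvector of `A(Ĝ_π)` for the `2s`-weighting
`π_i = P_i / y_i`, since `π_i y_i = P_i`. Conversely, from `π` and `y` take `s`-th roots `w_i` of
`y_i` and put `x(i,0) = π_i w_i`, `x(i,b) = w_i` for `b ≠ 0`, and `x = 0` off `S`; then again
`P_i = π_i y_i`. The eigenvalue `0` comes from a single vertex.
-/

open Finset Matrix

theorem prod_div_pow_card_pow_eq_one {ι K : Type*} [Fintype ι] [Field K] {r : ι → K} {a : K}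
    {n : ℕ} (hr : ∀ b, r b ^ n = a ^ n) (ha : a ≠ 0) :
    ((∏ b, r b) / a ^ Fintype.card ι) ^ n = 1 := by
  have hprod : (∏ b, r b) ^ n = (a ^ Fintype.card ι) ^ n := by
    rw [← prod_pow, prod_congr rfl fun b _ => hr b, prod_const, card_univ, ← pow_mul, ← pow_mul,
      mul_comm]
  rw [div_pow, hprod, div_self (pow_ne_zero _ (pow_ne_zero _ ha))]

theorem prod_ite_eq_zero_mul {M : Type*} [CommMonoid M] {s : ℕ} [NeZero s] (p w : M) :
    ∏ b : Fin s, (if b = 0 then p else 1) * w = p * w ^ s := by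
  rw [prod_mul_distrib, prod_ite_eq' univ 0 fun _ => p, if_pos (mem_univ _), prod_const,
    card_univ, Fintype.card_fin]

section Weighted

variable {V : Type*} [Fintype V] (G : SimpleGraph V) [DecidableRel G.Adj]

/-- `A(Ĝ_π)` for the subgraph `Ĝ` of `G` induced on `S`. -/
def weightedAdj (S : Finset V) (π : S → ℂ) : Matrix S S ℂ :=
  of fun i j => if G.Adj i j then π i * π j else 0

def IsWeightedInducedEig (s : ℕ) (lam : ℂ) : Prop :=
  ∃ S : Finset V, ∃ π : S → ℂ, (∀ i, π i ^ (2 * s) = 1) ∧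
    ∃ y : S → ℂ, y ≠ 0 ∧ weightedAdj G S π *ᵥ y = lam • y

variable {G}

theorem weightedAdj_mulVec_apply {S : Finset V} {π y : S → ℂ} {f : V → ℂ}
    (hf : ∀ j : S, f j = π j * y j) (hf0 : ∀ j ∉ S, f j = 0) (i : S) :
    (weightedAdj G S π *ᵥ y) i = π i * ∑ j ∈ G.neighborFinset i, f j := by
  classical
  have hsummand : ∀ j : S, (if G.Adj i j then π i * π j else 0) * y j =
      π i * if G.Adj i j then f j else 0 := by
    intro j
    split_ifs <;> simp [hf, mul_assoc]
  simp only [mulVec, dotProduct, weightedAdj, of_apply, hsummand, ← mul_sum]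
  rw [sum_coe_sort S fun j => if G.Adj i j then f j else 0,
    sum_subset (subset_univ S) fun j _ hj => by simp [hf0 j hj],
    ← sum_filter, SimpleGraph.neighborFinset_eq_filter]

theorem isWeightedInducedEig_zero (s : ℕ) (v : V) : IsWeightedInducedEig G s 0 := by
  classical
  refine ⟨{v}, 1, fun _ => one_pow _, 1, one_ne_zero, ?_⟩
  ext ⟨i, hi⟩
  obtain rfl := mem_singleton.mp hi
  rw [weightedAdj_mulVec_apply (f := fun j => if j = i then 1 else 0)
    (fun ⟨j, hj⟩ => by simp [mem_singleton.mp hj]) fun j hj => if_neg (by simpa using hj)]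
  simp

end Weighted

section Blowup

variable {V : Type*} [Fintype V] {G : SimpleGraph V} [DecidableRel G.Adj] {s : ℕ} {lam : ℂ}
  {x : V × Fin s → ℂ}

theorem IsBlowupEig.lam_mul_pow_eq (h : IsBlowupEig G s lam x) (hs : 1 ≤ s) (i : V) (a : Fin s) :
    lam * x (i, a) ^ (2 * s) =
      (∏ b, x (i, b)) * ∑ j ∈ G.neighborFinset i, ∏ b, x (j, b) := by
  classical
  have := congrArg (x (i, a) * ·) (h i a)
  rwa [mul_left_comm, mul_pow_sub_one (by omega), ← mul_assoc,
    mul_prod_erase univ (fun b => x (i, b)) (mem_univ a)] at this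

theorem IsBlowupEig.pow_eq_pow (h : IsBlowupEig G s lam x) (hs : 1 ≤ s) (hlam : lam ≠ 0)
    (i : V) (a b : Fin s) : x (i, a) ^ (2 * s) = x (i, b) ^ (2 * s) :=
  mul_left_cancel₀ hlam ((h.lam_mul_pow_eq hs i a).trans (h.lam_mul_pow_eq hs i b).symm)

theorem isBlowupEig_of_lam_mul_pow_eq (hs : 2 ≤ s)
    (hrow : ∀ i a, x (i, a) = 0 → ∀ b, x (i, b) = 0)
    (heq : ∀ i a, x (i, a) ≠ 0 → lam * x (i, a) ^ (2 * s) =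
      (∏ b, x (i, b)) * ∑ j ∈ G.neighborFinset i, ∏ b, x (j, b)) :
    IsBlowupEig G s lam x := by
  classical
  intro i a
  by_cases hx : x (i, a) = 0
  · obtain ⟨b, hb⟩ : (univ.erase a).Nonempty := by
      rw [← card_pos, card_erase_of_mem (mem_univ a), card_univ, Fintype.card_fin]; omega
    rw [hx, zero_pow (by omega), mul_zero, prod_eq_zero hb (hrow i a hx b), zero_mul]
  · rw [← mul_right_inj' hx, mul_left_comm, mul_pow_sub_one (by omega), ← mul_assoc,
      mul_prod_erase univ (fun b => x (i, b)) (mem_univ a)]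
    exact heq i a hx

theorem IsBlowupEig.isWeightedInducedEig [NeZero s] (h : IsBlowupEig G s lam x) (hlam : lam ≠ 0)
    (hx : x ≠ 0) : IsWeightedInducedEig G s lam := by
  classical
  have hs : 1 ≤ s := Nat.one_le_iff_ne_zero.mpr (NeZero.ne s)
  set P : V → ℂ := fun i => ∏ b, x (i, b)
  set S := univ.filter fun i => x (i, 0) ≠ 0
  have hS : ∀ i, i ∈ S ↔ x (i, 0) ≠ 0 := fun i => by simp [S]
  have hu : ∀ i : S, x (i, 0) ^ s ≠ 0 := fun i => pow_ne_zero _ ((hS i).mp i.2)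
  refine ⟨S, fun i => P i / x (i, 0) ^ s, fun i => ?_, fun i => x (i, 0) ^ s, ?_, ?_⟩
  · simpa using prod_div_pow_card_pow_eq_one (fun b => h.pow_eq_pow hs hlam i b 0)
      ((hS i).mp i.2)
  · obtain ⟨⟨i, a⟩, hia⟩ := Function.ne_iff.mp hx
    have hi0 : x (i, 0) ≠ 0 := fun h0 => hia ((pow_eq_zero_iff (by omega)).mp
      ((h.pow_eq_pow hs hlam i a 0).trans (by rw [h0, zero_pow (by omega)])))
    exact Function.ne_iff.mpr ⟨⟨i, (hS i).mpr hi0⟩, hu ⟨i, _⟩⟩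
  · ext i
    rw [weightedAdj_mulVec_apply (f := P) (fun j => (div_mul_cancel₀ _ (hu j)).symm)
      fun j hj => prod_eq_zero (mem_univ 0) (by simpa [hS] using hj)]
    rw [Pi.smul_apply, smul_eq_mul, div_mul_eq_mul_div, ← h.lam_mul_pow_eq hs i 0, two_mul,
      pow_add]
    field_simp [hu i]

theorem IsWeightedInducedEig.exists_isBlowupEig (hs : 2 ≤ s) (h : IsWeightedInducedEig G s lam) :
    ∃ x : V × Fin s → ℂ, x ≠ 0 ∧ IsBlowupEig G s lam x := by
  classical
  have : NeZero s := ⟨by omega⟩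
  obtain ⟨S, π, hπ, y, hy, heig⟩ := h
  set π' : V → ℂ := fun i => if hi : i ∈ S then π ⟨i, hi⟩ else 1
  set y' : V → ℂ := fun i => if hi : i ∈ S then y ⟨i, hi⟩ else 0
  choose w hw using fun i => IsAlgClosed.exists_pow_nat_eq (y' i) (n := s) (by omega)
  set c : V → Fin s → ℂ := fun i b => if b = 0 then π' i else 1
  have hc : ∀ i b, c i b ^ (2 * s) = 1 := by
    intro i b
    simp only [c, π']
    split_ifs <;> simp [hπ]
  have hc0 : ∀ i b, c i b ≠ 0 := fun i b hcib => by
    simpa [hcib, zero_pow (by omega : 2 * s ≠ 0)] using hc i b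
  have hP : ∀ i, ∏ b, c i b * w i = π' i * y' i := fun i => by
    rw [prod_ite_eq_zero_mul, hw]
  have hPS : ∀ i : S, π i * ∑ j ∈ G.neighborFinset i, ∏ b, c j b * w j = lam * y i := by
    intro i
    rw [← weightedAdj_mulVec_apply (y := y) (f := fun j => ∏ b, c j b * w j)
      (fun j => by simp [hP, π', y']) fun j hj => by simp [hP, y', hj], heig, Pi.smul_apply,
      smul_eq_mul]
  refine ⟨fun p => c p.1 p.2 * w p.1, ?_, isBlowupEig_of_lam_mul_pow_eq hs ?_ ?_⟩
  · obtain ⟨i, hi⟩ := Function.ne_iff.mp hy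
    refine Function.ne_iff.mpr ⟨(i, 0), mul_ne_zero (hc0 _ _) fun hwi => hi ?_⟩
    simpa [y', hwi, zero_pow (NeZero.ne s)] using (hw i).symm
  · intro i a hia b
    simp [(mul_eq_zero.mp hia).resolve_left (hc0 i a)]
  · intro i a hia
    have hi : i ∈ S := by
      by_contra hi
      have hwi : w i = 0 := (pow_eq_zero_iff (NeZero.ne s)).mp (by simp [hw, y', hi])
      exact hia (by simp [hwi])
    have hπi : π' i = π ⟨i, hi⟩ := dif_pos hi
    have hyi : y' i = y ⟨i, hi⟩ := dif_pos hi
    rw [hP i, mul_pow, hc, one_mul, mul_comm 2 s, pow_mul, hw, hπi, hyi]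
    linear_combination -y ⟨i, hi⟩ * hPS ⟨i, hi⟩

end Blowup

theorem stmt_6_general {V : Type*} [Fintype V]
    (G : SimpleGraph V) [DecidableRel G.Adj] (s : ℕ) (hs : 2 ≤ s) (lam : ℂ) :
    (∃ x : V × Fin s → ℂ, x ≠ 0 ∧ IsBlowupEig G s lam x) ↔
      ∃ S : Finset V, ∃ π : {i // i ∈ S} → ℂ, (∀ i, π i ^ (2 * s) = 1) ∧
        ∃ y : {i // i ∈ S} → ℂ, y ≠ 0 ∧
          (Matrix.of fun i j : {i // i ∈ S} =>
            if G.Adj i j then π i * π j else 0).mulVec y = lam • y := by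
  have : NeZero s := ⟨by omega⟩
  refine ⟨fun ⟨x, hx, h⟩ => ?_, IsWeightedInducedEig.exists_isBlowupEig hs⟩
  rcases eq_or_ne lam 0 with rfl | hlam
  · obtain ⟨⟨v, _⟩, _⟩ := Function.ne_iff.mp hx
    exact isWeightedInducedEig_zero s v
  · exact h.isWeightedInducedEig hlam hx

/-- Main theorem: `λ` is an eigenvalue of `G^[s]` iff it is an eigenvalue of some
2s-weighted induced subgraph of `G`. -/
theorem stmt_6 {V : Type*} [Fintype V] [DecidableEq V]
    (G : SimpleGraph V) [DecidableRel G.Adj] (s : ℕ) (hs : 2 ≤ s) (lam : ℂ) :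
    (∃ x : V × Fin s → ℂ, x ≠ 0 ∧ IsBlowupEig G s lam x) ↔
      ∃ S : Finset V, ∃ π : {i // i ∈ S} → ℂ, (∀ i, π i ^ (2 * s) = 1) ∧
        ∃ y : {i // i ∈ S} → ℂ, y ≠ 0 ∧
          (Matrix.of fun i j : {i // i ∈ S} =>
            if G.Adj i j then π i * π j else 0).mulVec y = lam • y :=
  stmt_6_general G s hs lam
end

section
/- Let G be a graph with adjacency spectral radius ρ(G), and let s ≥ 2. The spectral radius of the s-blowup hypergraph G^[s] (the maximum modulus of its eigenvalues) equals ρ(G). -/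
open Finset Matrix

/-!
Both suprema equal the largest eigenvalue `ρ` of the symmetric matrix `A = A(G)`, the top of its
Rayleigh quotient. If `A v = μ v`, then `|μ| |v| ≤ A |v|` entrywise, and the Rayleigh quotient at
`|v|` gives `|μ| ≤ ρ`. For an eigenpair `(λ, x)` of `G^[s]`, multiplying the `s` equations at a
vertex `i` shows that `z i = ∏ b, x (i, b)` satisfies `(λ z i)^s = ((A z) i)^s` when `z i ≠ 0`,
so again `|λ| |z| ≤ A |z|` and `|λ| ≤ ρ` (and `λ = 0` if `z = 0`). Conversely an eigenvector `v`
of `ρ` lifts to `G^[s]` by taking every `x (i, b)` to be an `s`-th root of `v i`.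
-/

theorem Finset.prod_prod_erase_eq_pow {ι M : Type*} [Fintype ι] [DecidableEq ι] [CommMonoid M]
    (f : ι → M) : ∏ a, ∏ b ∈ univ.erase a, f b = (∏ b, f b) ^ (Fintype.card ι - 1) := by
  rw [Finset.prod_comm' (t' := univ) (s' := fun b => univ.erase b) (by simp [ne_comm]),
    ← Finset.prod_pow]
  simp [Finset.card_erase_of_mem]

theorem Matrix.exists_mulVec_eq_smul_of_mem_spectrum {K n : Type*} [Field K] [Fintype n]
    [DecidableEq n] {A : Matrix n n K} {μ : K} (h : μ ∈ spectrum K A) :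
    ∃ v : n → K, v ≠ 0 ∧ A *ᵥ v = μ • v := by
  rw [← spectrum_toLin', ← Module.End.hasEigenvalue_iff_mem_spectrum] at h
  obtain ⟨v, hv⟩ := h.exists_hasEigenvector
  exact ⟨v, hv.2, hv.apply_eq_smul⟩

theorem LinearMap.re_inner_self_le_iSup_rayleigh_mul_norm_sq {𝕜 E : Type*} [RCLike 𝕜]
    [NormedAddCommGroup E] [InnerProductSpace 𝕜 E] [FiniteDimensional 𝕜 E]
    (T : E →ₗ[𝕜] E) (x : E) :
    RCLike.re (inner 𝕜 (T x) x) ≤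
      (⨆ y : {y : E // y ≠ 0}, RCLike.re (inner 𝕜 (T y) (y : E)) / ‖(y : E)‖ ^ 2) * ‖x‖ ^ 2 := by
  rcases eq_or_ne x 0 with rfl | hx
  · simp
  have hbdd : BddAbove (Set.range fun y : {y : E // y ≠ 0} =>
      RCLike.re (inner 𝕜 (T y) (y : E)) / ‖(y : E)‖ ^ 2) :=
    ⟨‖LinearMap.toContinuousLinearMap T‖, by
      rintro _ ⟨y, rfl⟩
      exact (le_abs_self _).trans ((LinearMap.toContinuousLinearMap T).rayleighQuotient_le_norm y)⟩
  rw [← div_le_iff₀ (by positivity)]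
  exact le_ciSup hbdd ⟨x, hx⟩

namespace SimpleGraph

variable {V : Type*} [Fintype V] [DecidableEq V] (G : SimpleGraph V) [DecidableRel G.Adj]

noncomputable def maxEigenvalue : ℝ :=
  ⨆ x : {x : EuclideanSpace ℂ V // x ≠ 0},
    RCLike.re (inner ℂ (toEuclideanLin (G.adjMatrix ℂ) x) (x : EuclideanSpace ℂ V)) /
      ‖(x : EuclideanSpace ℂ V)‖ ^ 2

theorem maxEigenvalue_mem_spectrum [Nonempty V] :
    (G.maxEigenvalue : ℂ) ∈ spectrum ℂ (G.adjMatrix ℂ) := by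
  rw [← spectrum_toLpLin 2, ← Module.End.hasEigenvalue_iff_mem_spectrum]
  exact LinearMap.IsSymmetric.hasEigenvalue_iSup_of_finiteDimensional
    (isSymmetric_toEuclideanLin_iff.2 (G.isHermitian_adjMatrix ℂ))

theorem le_maxEigenvalue_of_mul_norm_le (v : V → ℂ) (hv : v ≠ 0) (r : ℝ)
    (h : ∀ i, r * ‖v i‖ ≤ ‖∑ j ∈ G.neighborFinset i, v j‖) : r ≤ G.maxEigenvalue := by
  let w : EuclideanSpace ℂ V := WithLp.toLp 2 fun i => (‖v i‖ : ℂ)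
  have hw : 0 < ‖w‖ ^ 2 := by
    have : w ≠ 0 := by
      obtain ⟨i, hi⟩ := Function.ne_iff.1 hv
      exact fun h0 => hi (by simpa [w] using congr(($h0 : EuclideanSpace ℂ V) i))
    positivity
  have hnorm : ‖w‖ ^ 2 = ∑ i, ‖v i‖ ^ 2 := by
    simp [w, EuclideanSpace.norm_sq_eq]
  have hinner : RCLike.re (inner ℂ (toEuclideanLin (G.adjMatrix ℂ) w) w) =
      ∑ i, ‖v i‖ * ∑ j ∈ G.neighborFinset i, ‖v j‖ := by
    simp [w, PiLp.inner_apply, toLpLin_toLp]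
  have hsum : r * ‖w‖ ^ 2 ≤ RCLike.re (inner ℂ (toEuclideanLin (G.adjMatrix ℂ) w) w) := by
    rw [hnorm, hinner, Finset.mul_sum]
    refine Finset.sum_le_sum fun i _ => ?_
    calc r * ‖v i‖ ^ 2 = ‖v i‖ * (r * ‖v i‖) := by ring
      _ ≤ ‖v i‖ * ‖∑ j ∈ G.neighborFinset i, v j‖ := by gcongr; exact h i
      _ ≤ ‖v i‖ * ∑ j ∈ G.neighborFinset i, ‖v j‖ := by gcongr; exact norm_sum_le _ _
  exact le_of_mul_le_mul_right (hsum.trans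
    ((toEuclideanLin (G.adjMatrix ℂ)).re_inner_self_le_iSup_rayleigh_mul_norm_sq w)) hw

theorem maxEigenvalue_nonneg [Nonempty V] : 0 ≤ G.maxEigenvalue :=
  G.le_maxEigenvalue_of_mul_norm_le (fun _ => 1)
    (Function.ne_iff.2 ⟨Classical.arbitrary V, one_ne_zero⟩) 0 fun _ => by simp

theorem norm_le_maxEigenvalue_of_mem_spectrum {μ : ℂ} (h : μ ∈ spectrum ℂ (G.adjMatrix ℂ)) :
    ‖μ‖ ≤ G.maxEigenvalue := by
  obtain ⟨v, hv, hμ⟩ := exists_mulVec_eq_smul_of_mem_spectrum h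
  refine G.le_maxEigenvalue_of_mul_norm_le v hv _ fun i => ?_
  rw [← adjMatrix_mulVec_apply, hμ, Pi.smul_apply, smul_eq_mul, norm_mul]

end SimpleGraph

section Blowup

variable {V : Type*} [Fintype V] {G : SimpleGraph V} [DecidableRel G.Adj] {s : ℕ}

open SimpleGraph

theorem exists_isBlowupEig_of_mulVec_eq_smul (hs : s ≠ 0) {μ : ℂ} {v : V → ℂ} (hv : v ≠ 0)
    (hμ : G.adjMatrix ℂ *ᵥ v = μ • v) : ∃ x : V × Fin s → ℂ, x ≠ 0 ∧ IsBlowupEig G s μ x := by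
  choose y hy using fun i => IsAlgClosed.exists_pow_nat_eq (v i) (Nat.pos_of_ne_zero hs)
  have hprod (j : V) : ∏ _b : Fin s, y j = v j := by simp [hy]
  refine ⟨fun p => y p.1, fun h0 => hv (funext fun i => ?_), fun i a => ?_⟩
  · rw [← hy i, show y i = 0 from congrFun h0 (i, ⟨0, Nat.pos_of_ne_zero hs⟩), zero_pow hs]
    rfl
  · have hsum : ∑ j ∈ G.neighborFinset i, ∏ _b : Fin s, y j = μ * y i ^ s := by
      simp_rw [hprod, ← adjMatrix_mulVec_apply, hμ, Pi.smul_apply, smul_eq_mul, hy]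
    rw [hsum]
    simp only [prod_const, card_erase_of_mem (mem_univ a), card_univ, Fintype.card_fin]
    rw [show 2 * s - 1 = s - 1 + s by omega, pow_add]
    ring

variable {lam : ℂ} {x : V × Fin s → ℂ}

theorem IsBlowupEig.pow_mul_prod_pow (h : IsBlowupEig G s lam x) (i : V) :
    lam ^ s * (∏ b, x (i, b)) ^ (2 * s - 1) =
      (∏ b, x (i, b)) ^ (s - 1) * (∑ j ∈ G.neighborFinset i, ∏ b, x (j, b)) ^ s := by
  have := Finset.prod_congr rfl fun a (_ : a ∈ univ) => h i a
  rwa [prod_mul_distrib, prod_mul_distrib, prod_prod_erase_eq_pow, prod_pow, prod_const,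
    prod_const, card_univ, Fintype.card_fin] at this

theorem IsBlowupEig.norm_mul_norm_prod_le (hs : s ≠ 0) (h : IsBlowupEig G s lam x) (i : V) :
    ‖lam‖ * ‖∏ b, x (i, b)‖ ≤ ‖∑ j ∈ G.neighborFinset i, ∏ b, x (j, b)‖ := by
  set z := ∏ b, x (i, b)
  set S := ∑ j ∈ G.neighborFinset i, ∏ b, x (j, b)
  rcases eq_or_ne z 0 with hz | hz
  · simp [hz]
  have key : z ^ (s - 1) * (lam * z) ^ s = z ^ (s - 1) * S ^ s := by
    rw [← h.pow_mul_prod_pow i, show 2 * s - 1 = s - 1 + s by omega]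
    ring
  have hpow : ‖lam * z‖ ^ s = ‖S‖ ^ s := by
    rw [← norm_pow, ← norm_pow, mul_left_cancel₀ (pow_ne_zero _ hz) key]
  rw [← norm_mul, (pow_left_inj₀ (norm_nonneg _) (norm_nonneg _) hs).1 hpow]

theorem IsBlowupEig.norm_le_maxEigenvalue [DecidableEq V] (hs : s ≠ 0) (hx : x ≠ 0)
    (h : IsBlowupEig G s lam x) : ‖lam‖ ≤ G.maxEigenvalue := by
  by_cases hz : (fun i => ∏ b, x (i, b)) = 0
  · obtain ⟨⟨i, a⟩, hxia⟩ := Function.ne_iff.1 hx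
    have hlam : lam = 0 := by
      have := h i a
      simp only [show ∀ j, ∏ b, x (j, b) = 0 from congrFun hz, sum_const_zero, mul_zero,
        mul_eq_zero, pow_eq_zero_iff (show 2 * s - 1 ≠ 0 by omega)] at this
      exact this.resolve_right hxia
    have : Nonempty V := ⟨i⟩
    simpa [hlam] using G.maxEigenvalue_nonneg
  · exact G.le_maxEigenvalue_of_mul_norm_le _ hz _ (h.norm_mul_norm_prod_le hs)

end Blowup

/-- The spectral radius of `G^[s]` equals the adjacency spectral radius of `G`. -/
theorem stmt_7 {V : Type*} [Fintype V] [DecidableEq V] [Nonempty V]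
    (G : SimpleGraph V) [DecidableRel G.Adj] (s : ℕ) (hs : 2 ≤ s) :
    sSup {r : ℝ | ∃ lam : ℂ, (∃ x : V × Fin s → ℂ, x ≠ 0 ∧ IsBlowupEig G s lam x) ∧
        r = ‖lam‖} =
      sSup {r : ℝ | ∃ mu ∈ spectrum ℂ
        (Matrix.of fun i j : V => if G.Adj i j then (1 : ℂ) else 0), r = ‖mu‖} := by
  change _ = sSup {r : ℝ | ∃ mu ∈ spectrum ℂ (G.adjMatrix ℂ), r = ‖mu‖}
  have hs₀ : s ≠ 0 := by omega
  have hρ : G.maxEigenvalue = ‖(G.maxEigenvalue : ℂ)‖ :=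
    (Complex.norm_of_nonneg G.maxEigenvalue_nonneg).symm
  obtain ⟨v, hv, hρv⟩ := exists_mulVec_eq_smul_of_mem_spectrum G.maxEigenvalue_mem_spectrum
  obtain ⟨x, hx, hρx⟩ := exists_isBlowupEig_of_mulVec_eq_smul hs₀ hv hρv
  refine (IsGreatest.csSup_eq (a := G.maxEigenvalue) ⟨?_, ?_⟩).trans
    (IsGreatest.csSup_eq ⟨?_, ?_⟩).symm
  · exact ⟨_, ⟨x, hx, hρx⟩, hρ⟩
  · rintro _ ⟨lam, ⟨x, hx, h⟩, rfl⟩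
    exact h.norm_le_maxEigenvalue hs₀ hx
  · exact ⟨_, G.maxEigenvalue_mem_spectrum, hρ⟩
  · rintro _ ⟨μ, hμ, rfl⟩
    exact G.norm_le_maxEigenvalue_of_mem_spectrum hμ
end

section
/- The set of eigenvalues of the 2-blowup K₃^[2] (a 4-uniform hypergraph on 6 vertices with three hyperedges, each the union of two blowup classes) is exactly {0, 1, −1, i, −i, 2, −2, (1 ± √7 i)/2, (−1 ± √7 i)/2}. -/
/-!
Write `pᵢ = x (i, 0) * x (i, 1)` and `S = ∑ pⱼ`. The two equations of class `i` give
`lam² pᵢ³ = pᵢ (S - pᵢ)²`, and for `lam ≠ 0` a class with `pᵢ = 0` vanishes; so a nonzero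
eigenvalue is one of the triangle with vertex weights `p`: `(lam + eᵢ) pᵢ = eᵢ S` with
`eᵢ ∈ {0, 1, -1}`. If `S = 0` then `lam² = 1`; otherwise clearing the denominators of
`∑ eᵢ / (lam + eᵢ) = 1` gives `lam³ = e₂ lam + 2 e₃` in the elementary symmetric functions of
the `eᵢ`, and running through the sign patterns gives the listed roots. Conversely every value
has an eigenvector that is a multiple of `(1, t)` with `t⁴ = 1` on each class.
-/

open Finset Complex

/-- Eigen-equation for the 2-blowup `K₃^[2]`, the 4-uniform hypergraph with vertex
classes `{i} × Fin 2` for `i : Fin 3` and hyperedges the unions of two classes. -/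
def IsK3BlowupEig (lam : ℂ) (x : Fin 3 × Fin 2 → ℂ) : Prop :=
  ∀ (i : Fin 3) (a : Fin 2),
    lam * x (i, a) ^ 3 =
      (∏ b ∈ Finset.univ.erase a, x (i, b)) *
        ∑ j ∈ Finset.univ.erase i, ∏ b : Fin 2, x (j, b)

/-- The eigen-equations at a blown-up pair `{u, v}` of vertices whose neighbours contribute the
weight `s`. -/
def PairEqs {R : Type*} [CommRing R] (lam u v s : R) : Prop :=
  lam * u ^ 3 = v * s ∧ lam * v ^ 3 = u * s

namespace PairEqs

variable {R : Type*} [CommRing R] {lam u v s : R}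

lemma sq_mul_pow_three (h : PairEqs lam u v s) : lam ^ 2 * (u * v) ^ 3 = u * v * s ^ 2 := by
  linear_combination (lam * v ^ 3) * h.1 + (v * s) * h.2

lemma eq_zero_of_mul_eq_zero [NoZeroDivisors R] (h : PairEqs lam u v s) (hlam : lam ≠ 0)
    (huv : u * v = 0) : u = 0 ∧ v = 0 := by
  have hu : lam * u ^ 4 = 0 := by linear_combination u * h.1 + s * huv
  have hv : lam * v ^ 4 = 0 := by linear_combination v * h.2 + s * huv
  exact ⟨pow_eq_zero_iff four_ne_zero |>.mp ((mul_eq_zero.mp hu).resolve_left hlam),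
    pow_eq_zero_iff four_ne_zero |>.mp ((mul_eq_zero.mp hv).resolve_left hlam)⟩

lemma of_pow_four_eq_one {c t : R} (ht : t ^ 4 = 1) (h : lam * c ^ 3 = t * c * s) :
    PairEqs lam c (t * c) s :=
  ⟨h, by linear_combination t ^ 3 * h + c * s * ht⟩

end PairEqs

section WeightedTriangle

variable {K : Type*} [CommRing K] [IsDomain K] {lam : K}

lemma exists_sign_add_mul_eq {p S : K} (h : lam ^ 2 * p ^ 3 = p * (S - p) ^ 2) :
    ∃ e : K, (e = 0 ∨ e = 1 ∨ e = -1) ∧ (lam + e) * p = e * S := by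
  by_cases hp : p = 0
  · exact ⟨0, Or.inl rfl, by simp [hp]⟩
  have hsq : (lam * p) ^ 2 = (S - p) ^ 2 := mul_left_cancel₀ hp (by linear_combination h)
  rcases sq_eq_sq_iff_eq_or_eq_neg.mp hsq with h' | h'
  · exact ⟨1, Or.inr (Or.inl rfl), by linear_combination h'⟩
  · exact ⟨-1, Or.inr (Or.inr rfl), by linear_combination h'⟩

lemma pow_three_eq_of_add_mul_eq {a b c p q r : K} (hS : p + q + r ≠ 0)
    (hp : (lam + a) * p = a * (p + q + r)) (hq : (lam + b) * q = b * (p + q + r))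
    (hr : (lam + c) * r = c * (p + q + r)) :
    lam ^ 3 = (a * b + a * c + b * c) * lam + 2 * a * b * c :=
  mul_left_cancel₀ hS (by
    linear_combination (lam + b) * (lam + c) * hp + (lam + a) * (lam + c) * hq
      + (lam + a) * (lam + b) * hr)

end WeightedTriangle

section WeightedTriangleCharZero

variable {K : Type*} [Field K] [CharZero K] {lam : K}

lemma eigenvalue_cases_of_pow_three_eq {a b c : K} (hlam : lam ≠ 0)
    (ha : a = 0 ∨ a = 1 ∨ a = -1) (hb : b = 0 ∨ b = 1 ∨ b = -1) (hc : c = 0 ∨ c = 1 ∨ c = -1)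
    (h : lam ^ 3 = (a * b + a * c + b * c) * lam + 2 * a * b * c) :
    lam ^ 4 = 1 ∨ lam ^ 2 = 4 ∨ lam ^ 2 - lam + 2 = 0 ∨ lam ^ 2 + lam + 2 = 0 := by
  rcases ha with rfl | rfl | rfl <;> rcases hb with rfl | rfl | rfl <;>
    rcases hc with rfl | rfl | rfl <;> grind

lemma weightedTriangle_eigenvalue_cases {p : Fin 3 → K} (hlam : lam ≠ 0) (hp : p ≠ 0)
    (h : ∀ i, lam ^ 2 * p i ^ 3 = p i * (∑ j, p j - p i) ^ 2) :
    lam ^ 4 = 1 ∨ lam ^ 2 = 4 ∨ lam ^ 2 - lam + 2 = 0 ∨ lam ^ 2 + lam + 2 = 0 := by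
  by_cases hS : ∑ j, p j = 0
  · obtain ⟨i, hi⟩ := Function.ne_iff.mp hp
    have hsq : lam ^ 2 = 1 := mul_right_cancel₀ (pow_ne_zero 3 hi) (by
      linear_combination h i + p i * (∑ j, p j - 2 * p i) * hS)
    left
    linear_combination (lam ^ 2 + 1) * hsq
  · choose e he hep using fun i => exists_sign_add_mul_eq (h i)
    rw [Fin.sum_univ_three] at hS hep
    exact eigenvalue_cases_of_pow_three_eq hlam (he 0) (he 1) (he 2)
      (pow_three_eq_of_add_mul_eq hS (hep 0) (hep 1) (hep 2))

end WeightedTriangleCharZero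

lemma isK3BlowupEig_iff {lam : ℂ} {x : Fin 3 × Fin 2 → ℂ} :
    IsK3BlowupEig lam x ↔ ∀ i : Fin 3,
      PairEqs lam (x (i, 0)) (x (i, 1)) (∑ j, x (j, 0) * x (j, 1) - x (i, 0) * x (i, 1)) := by
  have h0 : univ.erase (0 : Fin 2) = {1} := by decide
  have h1 : univ.erase (1 : Fin 2) = {0} := by decide
  simp only [IsK3BlowupEig, PairEqs, Fin.forall_fin_two, sum_erase_eq_sub (mem_univ _),
    Fin.prod_univ_two, h0, h1, prod_singleton]

lemma IsK3BlowupEig.cases_of_ne_zero {lam : ℂ} {x : Fin 3 × Fin 2 → ℂ} (h : IsK3BlowupEig lam x)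
    (hx : x ≠ 0) :
    lam = 0 ∨ lam ^ 4 = 1 ∨ lam ^ 2 = 4 ∨ lam ^ 2 - lam + 2 = 0 ∨ lam ^ 2 + lam + 2 = 0 := by
  rw [isK3BlowupEig_iff] at h
  by_cases hlam : lam = 0
  · exact Or.inl hlam
  refine Or.inr (weightedTriangle_eigenvalue_cases (p := fun i => x (i, 0) * x (i, 1)) hlam ?_
    fun i => (h i).sq_mul_pow_three)
  intro hp
  apply hx
  ext ⟨i, a⟩
  obtain ⟨h0, h1⟩ := (h i).eq_zero_of_mul_eq_zero hlam (congrFun hp i)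
  fin_cases a
  exacts [h0, h1]

lemma exists_isK3BlowupEig_of_classes {lam : ℂ} (c t : Fin 3 → ℂ) (hc : c ≠ 0)
    (ht : ∀ i, t i ^ 4 = 1)
    (h : ∀ i, lam * c i ^ 3 = t i * c i * (∑ j, t j * c j ^ 2 - t i * c i ^ 2)) :
    ∃ x, x ≠ 0 ∧ IsK3BlowupEig lam x := by
  refine ⟨fun v => t v.1 ^ (v.2 : ℕ) * c v.1, fun hx => hc (funext fun i => ?_), ?_⟩
  · simpa using congrFun hx (i, 0)
  · refine isK3BlowupEig_iff.mpr fun i => ?_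
    have hprod : ∀ j, c j * (t j * c j) = t j * c j ^ 2 := fun j => by ring
    simpa [hprod] using PairEqs.of_pow_four_eq_one (ht i) (h i)

lemma exists_isK3BlowupEig_zero : ∃ x, x ≠ 0 ∧ IsK3BlowupEig 0 x := by
  refine ⟨Pi.single (0, 0) 1, by simp, isK3BlowupEig_iff.mpr fun i => ?_⟩
  simp [PairEqs, Pi.single_apply]

lemma exists_isK3BlowupEig_of_pow_four_eq_one {lam : ℂ} (h : lam ^ 4 = 1) :
    ∃ x, x ≠ 0 ∧ IsK3BlowupEig lam x := by
  refine exists_isK3BlowupEig_of_classes ![1, 1, 0] ![1, lam, 1] (by simp)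
    (fun i => by fin_cases i <;> simp [h]) (fun i => ?_)
  fin_cases i <;> simp [Fin.sum_univ_three]

lemma exists_isK3BlowupEig_of_sq_eq_four {lam : ℂ} (h : lam ^ 2 = 4) :
    ∃ x, x ≠ 0 ∧ IsK3BlowupEig lam x := by
  obtain ⟨t, ht⟩ := IsAlgClosed.exists_pow_nat_eq (lam / 2) two_pos
  refine exists_isK3BlowupEig_of_classes 1 (fun _ => t) one_ne_zero
    (fun _ => by linear_combination (t ^ 2 + lam / 2) * ht + h / 4) (fun i => ?_)
  simp only [Pi.one_apply, Fin.sum_univ_three]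
  linear_combination -2 * ht

lemma exists_isK3BlowupEig_of_sq_sub_add_two_eq_zero {lam : ℂ} (h : lam ^ 2 - lam + 2 = 0) :
    ∃ x, x ≠ 0 ∧ IsK3BlowupEig lam x := by
  obtain ⟨c₀, hc₀⟩ := IsAlgClosed.exists_pow_nat_eq (I * (lam + 1)) two_pos
  obtain ⟨c₁, hc₁⟩ := IsAlgClosed.exists_pow_nat_eq (lam - 1) two_pos
  have hc₁0 : c₁ ≠ 0 := by
    rintro rfl
    have hlam : lam = 1 := by linear_combination -hc₁
    norm_num [hlam] at h
  refine exists_isK3BlowupEig_of_classes ![c₀, c₁, c₁] ![I, 1, 1]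
    (fun hc => hc₁0 (by simpa using congrFun hc 1)) (fun i => by fin_cases i <;> simp)
    (fun i => ?_)
  fin_cases i <;> simp [Fin.sum_univ_three]
  · linear_combination lam * c₀ * hc₀ - 2 * I * c₀ * hc₁ + I * c₀ * h
  all_goals
    linear_combination -I * c₁ * hc₀ + (lam - 1) * c₁ * hc₁ + c₁ * h - c₁ * (lam + 1) * I_sq

lemma exists_isK3BlowupEig_of_sq_add_add_two_eq_zero {lam : ℂ} (h : lam ^ 2 + lam + 2 = 0) :
    ∃ x, x ≠ 0 ∧ IsK3BlowupEig lam x := by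
  obtain ⟨c₀, hc₀⟩ := IsAlgClosed.exists_pow_nat_eq (lam - 1) two_pos
  obtain ⟨c₁, hc₁⟩ := IsAlgClosed.exists_pow_nat_eq (I * (lam + 1)) two_pos
  have hc₀0 : c₀ ≠ 0 := by
    rintro rfl
    have hlam : lam = 1 := by linear_combination -hc₀
    norm_num [hlam] at h
  refine exists_isK3BlowupEig_of_classes ![c₀, c₁, c₁] ![1, I, I]
    (fun hc => hc₀0 (by simpa using congrFun hc 0)) (fun i => by fin_cases i <;> simp)
    (fun i => ?_)
  fin_cases i <;> simp [Fin.sum_univ_three]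
  · linear_combination lam * c₀ * hc₀ - 2 * I * c₀ * hc₁ + c₀ * h - 2 * c₀ * (lam + 1) * I_sq
  all_goals
    linear_combination -I * c₁ * hc₀ + (lam - I ^ 2) * c₁ * hc₁ + I * c₁ * h
      - I * c₁ * (lam + 1) * I_sq

lemma pow_four_eq_one_iff {z : ℂ} : z ^ 4 = 1 ↔ z = 1 ∨ z = -1 ∨ z = I ∨ z = -I := by
  grind [I_sq]

lemma sq_sub_add_two_eq_zero_iff {z : ℂ} :
    z ^ 2 - z + 2 = 0 ↔ z = (1 + √7 * I) / 2 ∨ z = (1 - √7 * I) / 2 := by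
  have hs : discrim 1 (-1) 2 = (√7 * I) * (√7 * I) := by
    rw [discrim]; ring_nf; rw [I_sq, ← ofReal_pow]; norm_num
  convert quadratic_eq_zero_iff one_ne_zero hs z using 2 <;> ring_nf

lemma sq_add_add_two_eq_zero_iff {z : ℂ} :
    z ^ 2 + z + 2 = 0 ↔ z = (-1 + √7 * I) / 2 ∨ z = (-1 - √7 * I) / 2 := by
  have hs : discrim 1 1 2 = (√7 * I) * (√7 * I) := by
    rw [discrim]; ring_nf; rw [I_sq, ← ofReal_pow]; norm_num
  convert quadratic_eq_zero_iff one_ne_zero hs z using 2 <;> ring_nf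

lemma mem_k3BlowupEigenvalues_iff {z : ℂ} :
    z ∈ ({0, 1, -1, I, -I, 2, -2,
        (1 + Real.sqrt 7 * I) / 2, (1 - Real.sqrt 7 * I) / 2,
        (-1 + Real.sqrt 7 * I) / 2, (-1 - Real.sqrt 7 * I) / 2} : Set ℂ) ↔
      z = 0 ∨ z ^ 4 = 1 ∨ z ^ 2 = 4 ∨ z ^ 2 - z + 2 = 0 ∨ z ^ 2 + z + 2 = 0 := by
  have h4 : z ^ 2 = 4 ↔ z = 2 ∨ z = -2 := by
    rw [show (4 : ℂ) = 2 ^ 2 by norm_num, sq_eq_sq_iff_eq_or_eq_neg]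
  simp only [Set.mem_insert_iff, Set.mem_singleton_iff, pow_four_eq_one_iff, h4,
    sq_sub_add_two_eq_zero_iff, sq_add_add_two_eq_zero_iff]
  tauto

theorem stmt_10 :
    {lam : ℂ | ∃ x : Fin 3 × Fin 2 → ℂ, x ≠ 0 ∧ IsK3BlowupEig lam x} =
      {0, 1, -1, I, -I, 2, -2,
        (1 + Real.sqrt 7 * I) / 2, (1 - Real.sqrt 7 * I) / 2,
        (-1 + Real.sqrt 7 * I) / 2, (-1 - Real.sqrt 7 * I) / 2} := by
  ext lam
  rw [Set.mem_ofPred_eq, mem_k3BlowupEigenvalues_iff]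
  constructor
  · rintro ⟨x, hx, h⟩
    exact h.cases_of_ne_zero hx
  · rintro (rfl | h | h | h | h)
    exacts [exists_isK3BlowupEig_zero, exists_isK3BlowupEig_of_pow_four_eq_one h,
      exists_isK3BlowupEig_of_sq_eq_four h, exists_isK3BlowupEig_of_sq_sub_add_two_eq_zero h,
      exists_isK3BlowupEig_of_sq_add_add_two_eq_zero h]
end

section
/- The eigenvalue −2 of the 4-uniform hypergraph K₃^[2] is an N-eigenvalue: there is no nonzero real vector x ∈ ℝ⁶ satisfying −2 x_v³ = Σ_{e ∋ v} Π_{u ∈ e\{v}} x_u for all vertices v of K₃^[2]. -/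
/-!
Write `u, v` for the two vertices of a class and `S` for the sum of the products `x_{v_j} x_{u_j}`
over the other classes. Multiplying the equations `μ u³ = v S` and `μ v³ = u S` by `u` and `v`
gives `u⁴ = v⁴`, hence `u² = v²`, and then `p = u v` satisfies `p (S - μ p) = 0`. With
`T = ∑ⱼ pⱼ` and `c = -(1 + μ) > 0` this reads `pᵢ (c pᵢ + T) = 0`; summing over `i` gives
`c ∑ pᵢ² + T² = 0`, so every `pᵢ = 0`, and `u² = v²` with `u v = 0` forces `u = v = 0`.
-/

open Finset

section PairEquations

variable {u v S μ : ℝ}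

theorem sq_eq_sq_of_eigen_pair (hμ : μ ≠ 0) (hu : μ * u ^ 3 = v * S) (hv : μ * v ^ 3 = u * S) :
    u ^ 2 = v ^ 2 := by
  have h4 : (u ^ 2) ^ 2 = (v ^ 2) ^ 2 :=
    mul_left_cancel₀ hμ (by linear_combination u * hu - v * hv)
  exact (sq_eq_sq₀ (sq_nonneg u) (sq_nonneg v)).1 h4

theorem mul_mul_sub_eq_zero_of_eigen (hu : μ * u ^ 3 = v * S) (huv : u ^ 2 = v ^ 2) :
    u * v * (S - μ * (u * v)) = 0 := by
  linear_combination -u * hu + μ * u ^ 2 * huv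

theorem eq_zero_of_sq_eq_sq_of_mul_eq_zero (huv : u ^ 2 = v ^ 2) (h : u * v = 0) :
    u = 0 ∧ v = 0 := by
  have hu : u ^ 2 * u ^ 2 = 0 := by linear_combination u ^ 2 * huv + u * v * h
  have hu : u = 0 := pow_eq_zero_iff two_ne_zero |>.1 (mul_self_eq_zero.1 hu)
  exact ⟨hu, pow_eq_zero_iff two_ne_zero |>.1 (by rw [← huv, hu]; ring)⟩

end PairEquations

theorem eq_zero_of_mul_add_sum_eq_zero {ι : Type*} [Fintype ι] {c : ℝ} (hc : 0 < c) {p : ι → ℝ}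
    (h : ∀ i, p i * (c * p i + ∑ j, p j) = 0) : p = 0 := by
  have hsum : c * ∑ i, p i ^ 2 + (∑ i, p i) ^ 2 = 0 :=
    calc c * ∑ i, p i ^ 2 + (∑ i, p i) ^ 2 = ∑ i, (c * p i ^ 2 + p i * ∑ j, p j) := by
          rw [sum_add_distrib, ← mul_sum, ← sum_mul, sq (∑ i, p i)]
      _ = ∑ i, p i * (c * p i + ∑ j, p j) := sum_congr rfl fun i _ => by ring
      _ = 0 := sum_eq_zero fun i _ => h i
  have hsq : ∑ i, p i ^ 2 = 0 := by
    nlinarith [sum_nonneg (fun i (_ : i ∈ univ) => sq_nonneg (p i)), sq_nonneg (∑ i, p i)]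
  funext i
  exact pow_eq_zero_iff two_ne_zero |>.1 <|
    (sum_eq_zero_iff_of_nonneg (fun i _ => sq_nonneg (p i))).1 hsq i (mem_univ i)

theorem Fin.univ_erase_eq_singleton_rev (a : Fin 2) : univ.erase a = {a.rev} := by
  fin_cases a <;> decide

/-- The eigen-equations of `K_m^[2]` for the eigenvalue `μ`: the vertex set is `ι × Fin 2`, with
classes `{(i, 0), (i, 1)}`. -/
def IsBlowupEigenpair {ι : Type*} [Fintype ι] [DecidableEq ι] (μ : ℝ) (x : ι × Fin 2 → ℝ) :
    Prop :=
  ∀ i a, μ * x (i, a) ^ 3 =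
    (∏ b ∈ univ.erase a, x (i, b)) * ∑ j ∈ univ.erase i, ∏ b : Fin 2, x (j, b)

section Blowup

variable {ι : Type*} [Fintype ι] [DecidableEq ι] {μ : ℝ} {x : ι × Fin 2 → ℝ}

theorem IsBlowupEigenpair.eq_mul_sum_sub (h : IsBlowupEigenpair μ x) (i : ι) (a : Fin 2) :
    μ * x (i, a) ^ 3 = x (i, a.rev) * (∑ j, x (j, 0) * x (j, 1) - x (i, 0) * x (i, 1)) := by
  simpa [Fin.univ_erase_eq_singleton_rev, sum_erase_eq_sub, Fin.prod_univ_two] using h i a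

theorem IsBlowupEigenpair.eq_zero (hμ : μ < -1) (h : IsBlowupEigenpair μ x) : x = 0 := by
  set p : ι → ℝ := fun i => x (i, 0) * x (i, 1)
  have hu i : μ * x (i, 0) ^ 3 = x (i, 1) * (∑ j, p j - p i) := h.eq_mul_sum_sub i 0
  have hv i : μ * x (i, 1) ^ 3 = x (i, 0) * (∑ j, p j - p i) := h.eq_mul_sum_sub i 1
  have hsq i : x (i, 0) ^ 2 = x (i, 1) ^ 2 :=
    sq_eq_sq_of_eigen_pair (by linarith) (hu i) (hv i)
  have hp : p = 0 := eq_zero_of_mul_add_sum_eq_zero (c := -(1 + μ)) (by linarith) fun i => by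
    linear_combination mul_mul_sub_eq_zero_of_eigen (hu i) (hsq i)
  funext ⟨i, a⟩
  obtain ⟨h0, h1⟩ := eq_zero_of_sq_eq_sq_of_mul_eq_zero (hsq i) (congrFun hp i)
  fin_cases a
  exacts [h0, h1]

end Blowup

/-- `-2` is an N-eigenvalue of `K₃^[2]`: it has no real eigenvector. -/
theorem stmt_12 :
    ¬ ∃ x : Fin 3 × Fin 2 → ℝ, x ≠ 0 ∧
      ∀ (i : Fin 3) (a : Fin 2),
        (-2 : ℝ) * x (i, a) ^ 3 =
          (∏ b ∈ Finset.univ.erase a, x (i, b)) *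
            ∑ j ∈ Finset.univ.erase i, ∏ b : Fin 2, x (j, b) := by
  rintro ⟨x, hx, h⟩
  exact hx (IsBlowupEigenpair.eq_zero (by norm_num) h)
end

section
/- Let G = (V,E) be a graph, s ≥ 2, and λ ≠ 0 an eigenvalue of G^[s] with eigenvector x. For each i ∈ V with all components of x on V_i nonzero, the quantity X_i := Π_{v ∈ V_i} x_v satisfies (λ X_i)^s = (Σ_{j : {i,j} ∈ E, X_j defined} X_j)^s, hence λ X_i = η_i Σ_j X_j for some s-th root of unity η_i. -/
open Finset

/-
Multiplying the eigen-equations at the `s` vertices `v ∈ V_i` gives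
`λ^s X_i^(2s-1) = X_i^(s-1) S^s`, where `S = Σ_{j ~ i} X_j`: each `x_u` with `u ∈ V_i` occurs in
`s - 1` of the products `Π_{u ∈ V_i \ {v}} x_u`. Cancelling `X_i^(s-1) ≠ 0` leaves
`(λ X_i)^s = S^s`, and two `s`-th powers agree only up to an `s`-th root of unity.
-/

theorem Finset.prod_prod_erase {ι M : Type*} [DecidableEq ι] [CommMonoid M] (s : Finset ι)
    (f : ι → M) : ∏ a ∈ s, ∏ b ∈ s.erase a, f b = (∏ b ∈ s, f b) ^ (#s - 1) := by
  rw [Finset.prod_comm' (s' := fun b => s.erase b) (t' := s)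
    (fun a b => by simp only [mem_erase]; tauto), ← prod_pow]
  exact prod_congr rfl fun b hb => by rw [prod_const, card_erase_of_mem hb]

theorem exists_pow_eq_one_and_eq_mul_of_pow_eq_pow {K : Type*} [CommGroupWithZero K] {n : ℕ}
    (hn : n ≠ 0) {w z : K} (h : w ^ n = z ^ n) : ∃ η : K, η ^ n = 1 ∧ w = η * z := by
  by_cases hz : z = 0
  · subst hz
    rw [zero_pow hn, pow_eq_zero_iff hn] at h
    exact ⟨1, one_pow n, by rw [h, mul_zero]⟩
  · exact ⟨w / z, by rw [div_pow, h, div_self (pow_ne_zero n hz)], (div_mul_cancel₀ w hz).symm⟩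

namespace IsBlowupEig

variable {V : Type*} [Fintype V] {G : SimpleGraph V} [DecidableRel G.Adj] {s : ℕ} {lam : ℂ}
  {x : V × Fin s → ℂ}

theorem pow_mul_prod_pow_s13 (heig : IsBlowupEig G s lam x) (i : V) :
    lam ^ s * (∏ a, x (i, a)) ^ (2 * s - 1) =
      (∏ a, x (i, a)) ^ (s - 1) * (∑ j ∈ G.neighborFinset i, ∏ b, x (j, b)) ^ s := by
  have h := prod_congr rfl fun a (_ : a ∈ (univ : Finset (Fin s))) => heig i a
  simpa only [prod_mul_distrib, prod_const, prod_pow, card_univ, Fintype.card_fin,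
    prod_prod_erase] using h

theorem mul_prod_pow_eq (heig : IsBlowupEig G s lam x) (hs : s ≠ 0) {i : V}
    (hi : ∀ a, x (i, a) ≠ 0) :
    (lam * ∏ a, x (i, a)) ^ s = (∑ j ∈ G.neighborFinset i, ∏ b, x (j, b)) ^ s := by
  have hX : (∏ a, x (i, a)) ^ (s - 1) ≠ 0 := pow_ne_zero _ (prod_ne_zero_iff.mpr fun a _ => hi a)
  have h := heig.pow_mul_prod_pow_s13 i
  rw [two_mul, Nat.add_sub_assoc (Nat.one_le_iff_ne_zero.mpr hs), pow_add, ← mul_assoc, ← mul_pow,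
    mul_comm _ (_ ^ s)] at h
  exact mul_right_cancel₀ hX h

end IsBlowupEig

theorem stmt_13_general {V : Type*} [Fintype V]
    (G : SimpleGraph V) [DecidableRel G.Adj] (s : ℕ) (hs : 2 ≤ s)
    (lam : ℂ) (x : V × Fin s → ℂ)
    (heig : IsBlowupEig G s lam x)
    (X : V → ℂ) (hX : ∀ i, X i = ∏ a : Fin s, x (i, a))
    (i : V) (hi : ∀ a : Fin s, x (i, a) ≠ 0) :
    (lam * X i) ^ s = (∑ j ∈ G.neighborFinset i, X j) ^ s ∧
      ∃ η : ℂ, η ^ s = 1 ∧ lam * X i = η * ∑ j ∈ G.neighborFinset i, X j := by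
  have hs0 : s ≠ 0 := Nat.ne_zero_of_lt hs
  have h : (lam * X i) ^ s = (∑ j ∈ G.neighborFinset i, X j) ^ s := by
    simpa only [hX] using heig.mul_prod_pow_eq hs0 hi
  exact ⟨h, exists_pow_eq_one_and_eq_mul_of_pow_eq_pow hs0 h⟩

theorem stmt_13 {V : Type*} [Fintype V] [DecidableEq V]
    (G : SimpleGraph V) [DecidableRel G.Adj] (s : ℕ) (hs : 2 ≤ s)
    (lam : ℂ) (hlam : lam ≠ 0) (x : V × Fin s → ℂ) (hx : x ≠ 0)
    (heig : IsBlowupEig G s lam x)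
    (X : V → ℂ) (hX : ∀ i, X i = ∏ a : Fin s, x (i, a))
    (i : V) (hi : ∀ a : Fin s, x (i, a) ≠ 0) :
    (lam * X i) ^ s = (∑ j ∈ G.neighborFinset i, X j) ^ s ∧
      ∃ η : ℂ, η ^ s = 1 ∧ lam * X i = η * ∑ j ∈ G.neighborFinset i, X j :=
  stmt_13_general G s hs lam x heig X hX i hi
end
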